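/- The size of the generic consistent formula is polynomial in the sample size: for a sample (P, N) of ultimately periodic words stored as pairs (u,v) with total size |S| = Σ_{uv^ω ∈ P∪N} |uv|, there exists an LTL formula consistent with (P,N) whose number of distinct subformulas is O(|S|⁴). -/

import Mathlib

def suffixW {A : Type*} (w : ℕ → A) (k : ℕ) : ℕ → A := fun n => w (n + k)

def upWord {A : Type*} (u v : List A) (hv : v ≠ []) : ℕ → A := fun n =>
  if h : n < u.length then u.get ⟨n, h⟩
  else v.get ⟨(n - u.length) % v.length, Nat.mod_lt _ (List.length_pos_iff.mpr hv)⟩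

inductive LTL (P : Type*) where
  | atom : P → LTL P
  | neg : LTL P → LTL P
  | disj : LTL P → LTL P → LTL P
  | next : LTL P → LTL P
  | untl : LTL P → LTL P → LTL P
  deriving DecidableEq

/-- Satisfaction over words whose letters are subsets of AP, encoded as finsets. -/
def sat {P : Type*} : LTL P → (ℕ → Finset P) → Prop
  | .atom p, w => p ∈ w 0
  | .neg φ, w => ¬ sat φ w
  | .disj φ ψ, w => sat φ w ∨ sat ψ w
  | .next φ, w => sat φ (suffixW w 1)
  | .untl φ ψ, w => ∃ i, sat ψ (suffixW w i) ∧ ∀ j < i, sat φ (suffixW w j)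

/-- The set of (distinct) subformulas of an LTL formula. -/
def subf {P : Type*} [DecidableEq P] : LTL P → Finset (LTL P)
  | .atom p => {.atom p}
  | .neg φ => insert (.neg φ) (subf φ)
  | .disj φ ψ => insert (.disj φ ψ) (subf φ ∪ subf ψ)
  | .next φ => insert (.next φ) (subf φ)
  | .untl φ ψ => insert (.untl φ ψ) (subf φ ∪ subf ψ)

/-- The size of an LTL formula: the number of nodes of its syntax DAG,
i.e. the number of its distinct subformulas. -/
def sizeD {P : Type*} [DecidableEq P] (φ : LTL P) : ℕ := (subf φ).card

/-!
For every positive word `α` and negative word `β` the two lassos `u₁v₁^ω ≠ u₂v₂^ω` already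
differ at a position `k < |u₁| + |u₂| + |v₁||v₂|`, since beyond the prefixes both words repeat
with the common period `|v₁||v₂|`. The formula `Xᵏ a` (or `Xᵏ ¬a`) for a proposition `a` on
which the two letters at `k` differ separates them and has `O(|S|²)` subformulas. The formula
`⋁_{α ∈ P} ⋀_{β ∈ N} φ_{α,β}` is then consistent with the sample, and since `|P|, |N| ≤ |S|`
its size is `O(|S|⁴)`.
-/

namespace LTL

variable {P : Type*}

noncomputable def tt (P : Type*) [Nonempty P] : LTL P :=
  .disj (.atom (Classical.arbitrary P)) (.neg (.atom (Classical.arbitrary P)))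

noncomputable def ff (P : Type*) [Nonempty P] : LTL P := .neg (tt P)

def conj (φ ψ : LTL P) : LTL P := .neg (.disj (.neg φ) (.neg ψ))

def nextN : ℕ → LTL P → LTL P
  | 0, φ => φ
  | k + 1, φ => .next (nextN k φ)

noncomputable def disjList (P : Type*) [Nonempty P] : List (LTL P) → LTL P
  | [] => ff P
  | φ :: l => .disj φ (disjList P l)

noncomputable def conjList (P : Type*) [Nonempty P] : List (LTL P) → LTL P
  | [] => tt P
  | φ :: l => conj φ (conjList P l)

end LTL

open LTL

section Semantics

variable {P : Type*}

lemma sat_tt [Nonempty P] (w : ℕ → Finset P) : sat (tt P) w := by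
  simp only [tt, sat]
  tauto

lemma sat_ff [Nonempty P] (w : ℕ → Finset P) : ¬ sat (ff P) w := by
  simpa only [ff, sat, not_not] using sat_tt w

lemma sat_conj (φ ψ : LTL P) (w : ℕ → Finset P) : sat (conj φ ψ) w ↔ sat φ w ∧ sat ψ w := by
  simp only [conj, sat]
  tauto

lemma sat_disjList [Nonempty P] (l : List (LTL P)) (w : ℕ → Finset P) :
    sat (disjList P l) w ↔ ∃ φ ∈ l, sat φ w := by
  induction l with
  | nil => simp [disjList, sat_ff]
  | cons φ l ih => simp [disjList, sat, ih]

lemma sat_conjList [Nonempty P] (l : List (LTL P)) (w : ℕ → Finset P) :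
    sat (conjList P l) w ↔ ∀ φ ∈ l, sat φ w := by
  induction l with
  | nil => simp [conjList, sat_tt]
  | cons φ l ih => simp [conjList, sat_conj, ih]

lemma suffixW_suffixW {A : Type*} (w : ℕ → A) (k m : ℕ) :
    suffixW (suffixW w m) k = suffixW w (k + m) := by
  funext n
  simp only [suffixW, Nat.add_assoc]

lemma sat_nextN (k : ℕ) (φ : LTL P) (w : ℕ → Finset P) :
    sat (nextN k φ) w ↔ sat φ (suffixW w k) := by
  induction k generalizing w with
  | zero => rfl
  | succ k ih => simp only [nextN, sat, ih, suffixW_suffixW]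

end Semantics

section Size

variable {P : Type*} [DecidableEq P]

lemma sizeD_atom (p : P) : sizeD (.atom p : LTL P) = 1 := by
  simp [sizeD, subf]

lemma sizeD_neg_le (φ : LTL P) : sizeD (.neg φ) ≤ sizeD φ + 1 :=
  Finset.card_insert_le _ _

lemma sizeD_next_le (φ : LTL P) : sizeD (.next φ) ≤ sizeD φ + 1 :=
  Finset.card_insert_le _ _

lemma sizeD_disj_le (φ ψ : LTL P) : sizeD (.disj φ ψ) ≤ sizeD φ + sizeD ψ + 1 :=
  (Finset.card_insert_le _ _).trans (Nat.add_le_add_right (Finset.card_union_le _ _) 1)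

lemma sizeD_conj_le (φ ψ : LTL P) : sizeD (conj φ ψ) ≤ sizeD φ + sizeD ψ + 4 := by
  have := sizeD_neg_le (.disj (.neg φ) (.neg ψ))
  have := sizeD_disj_le (.neg φ) (.neg ψ)
  have := sizeD_neg_le φ
  have := sizeD_neg_le ψ
  unfold conj
  omega

lemma sizeD_tt_le [Nonempty P] : sizeD (tt P) ≤ 4 := by
  have := sizeD_disj_le (.atom (Classical.arbitrary P)) (.neg (.atom (Classical.arbitrary P)))
  have := sizeD_neg_le (.atom (Classical.arbitrary P))
  have := sizeD_atom (Classical.arbitrary P)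
  unfold tt
  omega

lemma sizeD_ff_le [Nonempty P] : sizeD (ff P) ≤ 5 :=
  (sizeD_neg_le _).trans (Nat.add_le_add_right sizeD_tt_le 1)

lemma sizeD_nextN_le (k : ℕ) (φ : LTL P) : sizeD (nextN k φ) ≤ sizeD φ + k := by
  induction k with
  | zero => exact le_rfl
  | succ k ih => exact (sizeD_next_le _).trans (by omega)

lemma sizeD_disjList_le [Nonempty P] {m : ℕ} (l : List (LTL P)) (hl : ∀ φ ∈ l, sizeD φ ≤ m) :
    sizeD (disjList P l) ≤ l.length * (m + 1) + 5 := by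
  induction l with
  | nil => simpa [disjList] using sizeD_ff_le (P := P)
  | cons φ l ih =>
    have := sizeD_disj_le φ (disjList P l)
    have := hl φ List.mem_cons_self
    have := ih fun ψ hψ => hl ψ (List.mem_cons_of_mem φ hψ)
    simp only [disjList, List.length_cons]
    nlinarith

lemma sizeD_conjList_le [Nonempty P] {m : ℕ} (l : List (LTL P)) (hl : ∀ φ ∈ l, sizeD φ ≤ m) :
    sizeD (conjList P l) ≤ l.length * (m + 4) + 5 := by
  induction l with
  | nil => simpa [conjList] using sizeD_tt_le.trans (by omega : 4 ≤ 5)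
  | cons φ l ih =>
    have := sizeD_conj_le φ (conjList P l)
    have := hl φ List.mem_cons_self
    have := ih fun ψ hψ => hl ψ (List.mem_cons_of_mem φ hψ)
    simp only [conjList, List.length_cons]
    nlinarith

end Size

section Separation

variable {P : Type*} [DecidableEq P]

lemma exists_sat_not_sat_of_ne_zero {w₁ w₂ : ℕ → Finset P} (h : w₁ 0 ≠ w₂ 0) :
    ∃ φ : LTL P, sat φ w₁ ∧ ¬ sat φ w₂ ∧ sizeD φ ≤ 2 := by
  obtain ⟨a, ha⟩ : ∃ a, ¬ (a ∈ w₁ 0 ↔ a ∈ w₂ 0) := by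
    simpa only [Ne, Finset.ext_iff, not_forall] using h
  by_cases h₁ : a ∈ w₁ 0
  · exact ⟨.atom a, h₁, by tauto, (sizeD_atom a).trans_le (by omega)⟩
  · refine ⟨.neg (.atom a), h₁, fun h₂ => ha ⟨by tauto, fun h₂' => (h₂ h₂').elim⟩, ?_⟩
    exact (sizeD_neg_le _).trans (by rw [sizeD_atom])

lemma exists_sat_not_sat_of_ne {w₁ w₂ : ℕ → Finset P} {k : ℕ} (h : w₁ k ≠ w₂ k) :
    ∃ φ : LTL P, sat φ w₁ ∧ ¬ sat φ w₂ ∧ sizeD φ ≤ k + 2 := by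
  obtain ⟨φ, h₁, h₂, hφ⟩ :=
    exists_sat_not_sat_of_ne_zero (w₁ := suffixW w₁ k) (w₂ := suffixW w₂ k) (by simpa [suffixW])
  refine ⟨nextN k φ, (sat_nextN k φ w₁).2 h₁, mt (sat_nextN k φ w₂).1 h₂, ?_⟩
  exact (sizeD_nextN_le k φ).trans (by omega)

lemma exists_sat_not_sat_of_pairwise [Nonempty P] {ι : Type*} (w : ι → ℕ → Finset P)
    (I J : Finset ι) (m : ℕ)
    (h : ∀ i ∈ I, ∀ j ∈ J, ∃ φ : LTL P, sat φ (w i) ∧ ¬ sat φ (w j) ∧ sizeD φ ≤ m) :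
    ∃ φ : LTL P, (∀ i ∈ I, sat φ (w i)) ∧ (∀ j ∈ J, ¬ sat φ (w j)) ∧
      sizeD φ ≤ I.card * (J.card * (m + 4) + 6) + 5 := by
  classical
  have h' : ∀ i j, ∃ φ : LTL P, i ∈ I → j ∈ J →
      sat φ (w i) ∧ ¬ sat φ (w j) ∧ sizeD φ ≤ m := fun i j =>
    if hij : i ∈ I ∧ j ∈ J then (h i hij.1 j hij.2).imp fun _ hφ _ _ => hφ
    else ⟨ff P, fun hi hj => (hij ⟨hi, hj⟩).elim⟩
  choose F hF using h'
  let conjs (i : ι) : LTL P := conjList P (J.toList.map (F i))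
  have hconjs : ∀ i ∈ I, sizeD (conjs i) ≤ J.card * (m + 4) + 5 := by
    intro i hi
    simpa using sizeD_conjList_le (m := m) (J.toList.map (F i)) (by
      simp only [List.mem_map, Finset.mem_toList]
      rintro _ ⟨j, hj, rfl⟩
      exact (hF i j hi hj).2.2)
  refine ⟨disjList P (I.toList.map conjs), ?_, ?_, ?_⟩
  · intro i hi
    simp only [sat_disjList, List.mem_map, Finset.mem_toList]
    refine ⟨conjs i, ⟨i, hi, rfl⟩, (sat_conjList _ _).2 ?_⟩
    simp only [List.mem_map, Finset.mem_toList]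
    rintro _ ⟨j, hj, rfl⟩
    exact (hF i j hi hj).1
  · intro j hj
    rw [sat_disjList]
    rintro ⟨_, hmem, hsat⟩
    obtain ⟨i, hi, rfl⟩ := List.mem_map.1 hmem
    rw [Finset.mem_toList] at hi
    exact (hF i j hi hj).2.1 ((sat_conjList _ _).1 hsat (F i j) (by simpa using ⟨j, hj, rfl⟩))
  · simpa using sizeD_disjList_le (m := J.card * (m + 4) + 5) (I.toList.map conjs) (by
      simp only [List.mem_map, Finset.mem_toList]
      rintro _ ⟨i, hi, rfl⟩
      exact hconjs i hi)

end Separation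

section Lasso

variable {A : Type*}

lemma upWord_add_mul_length (u v : List A) (hv : v ≠ []) {n : ℕ} (hn : u.length ≤ n) (m : ℕ) :
    upWord u v hv (n + m * v.length) = upWord u v hv n := by
  have hsub : n + m * v.length - u.length = n - u.length + m * v.length := by omega
  simp only [upWord, dif_neg (show ¬ n + m * v.length < u.length by omega),
    dif_neg (show ¬ n < u.length by omega), hsub, Nat.add_mul_mod_self_right]

lemma eq_of_forall_lt_of_periodic {f g : ℕ → A} {N L : ℕ} (hL : 0 < L)
    (hf : ∀ n ≥ N, f (n + L) = f n) (hg : ∀ n ≥ N, g (n + L) = g n)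
    (h : ∀ n < N + L, f n = g n) : f = g := by
  funext n
  induction n using Nat.strong_induction_on with
  | _ n ih =>
    by_cases hn : n < N + L
    · exact h n hn
    · obtain ⟨k, rfl⟩ : ∃ k, n = k + L := ⟨n - L, by omega⟩
      rw [hf k (by omega), hg k (by omega), ih k (by omega)]

lemma exists_lt_upWord_ne {u₁ v₁ u₂ v₂ : List A} {h₁ : v₁ ≠ []} {h₂ : v₂ ≠ []}
    (hne : upWord u₁ v₁ h₁ ≠ upWord u₂ v₂ h₂) :
    ∃ k < u₁.length + u₂.length + v₁.length * v₂.length,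
      upWord u₁ v₁ h₁ k ≠ upWord u₂ v₂ h₂ k := by
  by_contra! h
  have hL : 0 < v₁.length * v₂.length :=
    Nat.mul_pos (List.length_pos_iff.2 h₁) (List.length_pos_iff.2 h₂)
  refine hne (eq_of_forall_lt_of_periodic (N := u₁.length + u₂.length) hL ?_ ?_ h)
  · intro n hn
    rw [mul_comm]
    exact upWord_add_mul_length u₁ v₁ h₁ (by omega) _
  · intro n hn
    exact upWord_add_mul_length u₂ v₂ h₂ (by omega) _

end Lasso

lemma exists_sat_not_sat_upWord {AP : Type*} [DecidableEq AP] {u₁ v₁ u₂ v₂ : List (Finset AP)}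
    {h₁ : v₁ ≠ []} {h₂ : v₂ ≠ []} (hne : upWord u₁ v₁ h₁ ≠ upWord u₂ v₂ h₂) :
    ∃ φ : LTL AP, sat φ (upWord u₁ v₁ h₁) ∧ ¬ sat φ (upWord u₂ v₂ h₂) ∧
      sizeD φ ≤ u₁.length + u₂.length + v₁.length * v₂.length + 1 := by
  obtain ⟨k, hk, hne⟩ := exists_lt_upWord_ne hne
  obtain ⟨φ, hφ⟩ := exists_sat_not_sat_of_ne hne
  exact ⟨φ, hφ.1, hφ.2.1, hφ.2.2.trans (by omega)⟩

/-- Junk value `fun _ => ∅` for an empty period, which no sample entry has. -/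
def sampleWord {AP : Type*} (p : List (Finset AP) × List (Finset AP)) : ℕ → Finset AP :=
  if h : p.2 ≠ [] then upWord p.1 p.2 h else fun _ => ∅

lemma sampleWord_eq {AP : Type*} {p : List (Finset AP) × List (Finset AP)} (h : p.2 ≠ []) :
    sampleWord p = upWord p.1 p.2 h :=
  dif_pos h

lemma size_polynomial_le (S : ℕ) : S * (S * ((S + 1) ^ 2 + 4) + 6) + 5 ≤ 14 * S ^ 4 + 14 := by
  rcases Nat.eq_zero_or_pos S with rfl | hS
  · norm_num
  · have h2 : S ^ 2 ≤ S ^ 4 := Nat.pow_le_pow_right hS (by norm_num)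
    have h3 : S ^ 3 ≤ S ^ 4 := Nat.pow_le_pow_right hS (by norm_num)
    have h1 : S ≤ S ^ 4 := by simpa using Nat.pow_le_pow_right hS (by norm_num : 1 ≤ 4)
    nlinarith

theorem generic_formula_size_general {AP : Type*} [DecidableEq AP] [Nonempty AP] :
    ∃ C : ℕ, ∀ Pos Neg : Finset (List (Finset AP) × List (Finset AP)),
      (∀ p ∈ Pos ∪ Neg, p.2 ≠ []) →
      (∀ p ∈ Pos, ∀ q ∈ Neg, ∀ (hp : p.2 ≠ []) (hq : q.2 ≠ []),
        upWord p.1 p.2 hp ≠ upWord q.1 q.2 hq) →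
      ∃ φ : LTL AP,
        (∀ p ∈ Pos, ∀ hp : p.2 ≠ [], sat φ (upWord p.1 p.2 hp)) ∧
        (∀ q ∈ Neg, ∀ hq : q.2 ≠ [], ¬ sat φ (upWord q.1 q.2 hq)) ∧
        sizeD φ ≤ C * ((Pos ∪ Neg).sum fun p => p.1.length + p.2.length) ^ 4 + C := by
  refine ⟨14, fun Pos Neg hv hsep => ?_⟩
  set S := (Pos ∪ Neg).sum fun p => p.1.length + p.2.length
  have hlen : ∀ p ∈ Pos ∪ Neg, p.1.length + p.2.length ≤ S := fun p hp =>
    Finset.single_le_sum (f := fun p => p.1.length + p.2.length) (fun _ _ => Nat.zero_le _) hp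
  have hcard : (Pos ∪ Neg).card ≤ S := by
    simpa using Finset.card_nsmul_le_sum _ (fun p => p.1.length + p.2.length) 1 fun p hp =>
      (List.length_pos_iff.2 (hv p hp)).trans_le (Nat.le_add_left _ _)
  have hpair : ∀ p ∈ Pos, ∀ q ∈ Neg, ∃ φ : LTL AP, sat φ (sampleWord p) ∧
      ¬ sat φ (sampleWord q) ∧ sizeD φ ≤ (S + 1) ^ 2 := by
    intro p hp q hq
    have hp' := Finset.mem_union_left Neg hp
    have hq' := Finset.mem_union_right Pos hq
    obtain ⟨φ, hφp, hφq, hφ⟩ := exists_sat_not_sat_upWord (hsep p hp q hq (hv p hp') (hv q hq'))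
    refine ⟨φ, by rwa [sampleWord_eq], by rwa [sampleWord_eq], hφ.trans ?_⟩
    nlinarith [hlen p hp', hlen q hq']
  obtain ⟨φ, hPos, hNeg, hsize⟩ := exists_sat_not_sat_of_pairwise sampleWord Pos Neg _ hpair
  refine ⟨φ, fun p hp h => sampleWord_eq h ▸ hPos p hp,
    fun q hq h => sampleWord_eq h ▸ hNeg q hq, hsize.trans ?_⟩
  calc Pos.card * (Neg.card * ((S + 1) ^ 2 + 4) + 6) + 5
      ≤ S * (S * ((S + 1) ^ 2 + 4) + 6) + 5 := by
        gcongr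
        · exact (Finset.card_le_card Finset.subset_union_left).trans hcard
        · exact (Finset.card_le_card Finset.subset_union_right).trans hcard
    _ ≤ 14 * S ^ 4 + 14 := size_polynomial_le S

theorem generic_formula_size {AP : Type*} [Fintype AP] [DecidableEq AP] [Nonempty AP] :
    ∃ C : ℕ, ∀ Pos Neg : Finset (List (Finset AP) × List (Finset AP)),
      (∀ p ∈ Pos ∪ Neg, p.2 ≠ []) →
      (∀ p ∈ Pos, ∀ q ∈ Neg, ∀ (hp : p.2 ≠ []) (hq : q.2 ≠ []),
        upWord p.1 p.2 hp ≠ upWord q.1 q.2 hq) →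
      ∃ φ : LTL AP,
        (∀ p ∈ Pos, ∀ hp : p.2 ≠ [], sat φ (upWord p.1 p.2 hp)) ∧
        (∀ q ∈ Neg, ∀ hq : q.2 ≠ [], ¬ sat φ (upWord q.1 q.2 hq)) ∧
        sizeD φ ≤ C * ((Pos ∪ Neg).sum fun p => p.1.length + p.2.length) ^ 4 + C :=
  generic_formula_size_general
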